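/- Let n ≥ 1 and let σ ∈ ℂ with Re σ > −n. Then the function x ↦ K̃_{−σ/2}(|x|) is absolutely integrable on ℝ^n, and there exists a constant c ∈ ℂ with c ≠ 0, depending only on n and σ, such that for all ξ ∈ ℝ^n: ∫_{ℝ^n} e^{−i⟨ξ,x⟩} K̃_{−σ/2}(|x|) dx = c·(1+|ξ|²)^{−(σ+n)/2}. -/

import Mathlib

open MeasureTheory

noncomputable section

/-- The K-Bessel function `K_α(r) = ∫₀^∞ e^{−r cosh t} cosh(αt) dt`. -/
def KBessel (α : ℂ) (r : ℝ) : ℂ :=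
  ∫ t in Set.Ioi (0 : ℝ), (Real.exp (-r * Real.cosh t) : ℂ) * Complex.cosh (α * t)

/-- The renormalized K-Bessel function `K̃_α(r) = (r/2)^{−α} K_α(r)`. -/
def Ktilde (α : ℂ) (r : ℝ) : ℂ := ((r : ℂ) / 2) ^ (-α) * KBessel α r

/-!
Substituting `t = s - log (r / 2)` in the defining integral writes `K̃_α(r)` as a superposition
`½ ∫ exp (-eˢ - r²e⁻ˢ/4 - αs) ds` of Gaussians in `r`. For fixed `s` the Fourier transform of
`x ↦ exp (-e⁻ˢ|x|²/4)` on a `d`-dimensional space is `(4πeˢ)^{d/2} exp (-eˢ|ξ|²)`; the same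
computation at `ξ = 0`, applied to absolute values, justifies Fubini. What remains is
`∫ exp (-a eˢ + ws) ds = a^{-w} Γ(w)` with `a = 1 + |ξ|²` and `w = d/2 - α`, which is `t = eˢ` in
Euler's integral.
-/

open Set
open scoped Real Complex
open Complex (I)

lemma Real.sq_div_four_le_cosh (t : ℝ) : t ^ 2 / 4 ≤ Real.cosh t := by
  rw [← Real.cosh_abs, Real.cosh_eq]
  nlinarith [Real.quadratic_le_exp_of_nonneg (abs_nonneg t), Real.exp_pos (-|t|), sq_abs t,
    abs_nonneg t]

lemma Complex.ofReal_cpow_eq_cexp_mul_log {x : ℝ} (hx : 0 < x) (z : ℂ) :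
    (x : ℂ) ^ z = cexp (z * Real.log x) := by
  rw [Complex.cpow_def_of_ne_zero (by exact_mod_cast hx.ne'), ← Complex.ofReal_log hx.le,
    mul_comm]

lemma Complex.ofReal_exp_cpow (s : ℝ) (z : ℂ) : (rexp s : ℂ) ^ z = cexp (z * s) := by
  rw [Complex.ofReal_cpow_eq_cexp_mul_log (Real.exp_pos s), Real.log_exp]

lemma integral_Ioi_zero_eq_integral_exp_smul {F : Type*} [NormedAddCommGroup F]
    [NormedSpace ℝ F] (g : ℝ → F) :
    ∫ t in Ioi (0 : ℝ), g t = ∫ s : ℝ, rexp s • g (rexp s) := by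
  rw [← Real.range_exp, ← image_univ,
    integral_image_eq_integral_abs_deriv_smul MeasurableSet.univ
      (fun x _ => (Real.hasDerivAt_exp x).hasDerivWithinAt) Real.exp_injective.injOn g]
  simp [abs_of_pos (Real.exp_pos _)]

lemma integral_cexp_neg_mul_exp_add_mul {a : ℝ} (ha : 0 < a) {w : ℂ} (hw : 0 < w.re) :
    ∫ s : ℝ, cexp (-(a * rexp s) + w * s) = (a : ℂ) ^ (-w) * Complex.Gamma w := by
  have hGamma := Complex.integral_cpow_mul_exp_neg_mul_Ioi hw ha
  rw [integral_Ioi_zero_eq_integral_exp_smul, one_div,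
    Complex.inv_cpow _ _ (by simpa [Complex.arg_ofReal_of_nonneg ha.le] using Real.pi_ne_zero.symm),
    ← Complex.cpow_neg] at hGamma
  rw [← hGamma]
  congr 1 with s
  rw [Complex.real_smul, Complex.ofReal_exp_cpow, Complex.ofReal_exp, ← Complex.exp_add,
    ← Complex.exp_add]
  ring_nf

lemma integrable_cexp_neg_mul_exp_add_mul {a : ℝ} (ha : 0 < a) {w : ℂ} (hw : 0 < w.re) :
    Integrable (fun s : ℝ => cexp (-(a * rexp s) + w * s)) := by
  -- a non-integrable function would have integral `0`
  refine .of_integral_ne_zero ?_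
  rw [integral_cexp_neg_mul_exp_add_mul ha hw]
  exact mul_ne_zero (by simp [Complex.cpow_eq_zero_iff, ha.ne'])
    (Complex.Gamma_ne_zero_of_re_pos hw)

lemma integrable_exp_neg_mul_cosh_mul_cexp {r : ℝ} (hr : 0 < r) (α : ℂ) :
    Integrable (fun t : ℝ => (rexp (-r * Real.cosh t) : ℂ) * cexp (-α * t)) := by
  refine (integrable_cexp_quadratic (b := r / 4) (by simpa using hr) (-α) 0).mono
    (by fun_prop) (ae_of_all _ fun t => ?_)
  simp only [norm_mul, Complex.norm_real, Real.norm_eq_abs, Complex.norm_exp,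
    abs_of_pos (Real.exp_pos _), ← Real.exp_add, Real.exp_le_exp, ← Complex.ofReal_pow,
    Complex.add_re, Complex.mul_re, Complex.neg_re, Complex.neg_im, Complex.ofReal_re,
    Complex.ofReal_im, Complex.div_ofNat_re, Complex.div_ofNat_im, Complex.zero_re]
  nlinarith [mul_le_mul_of_nonneg_left (Real.sq_div_four_le_cosh t) hr.le]

lemma KBessel_eq_half_integral {r : ℝ} (hr : 0 < r) (α : ℂ) :
    KBessel α r = 1 / 2 * ∫ t : ℝ, (rexp (-r * Real.cosh t) : ℂ) * cexp (-α * t) := by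
  set f : ℝ → ℂ := fun t => (rexp (-r * Real.cosh t) : ℂ) * cexp (-α * t)
  have hf : Integrable f := integrable_exp_neg_mul_cosh_mul_cexp hr α
  have h_even_part (t : ℝ) :
      f (-t) + f t = 2 * ((rexp (-r * Real.cosh t) : ℂ) * Complex.cosh (α * t)) := by
    simp only [f, Real.cosh_neg, Complex.cosh, Complex.ofReal_neg]
    ring_nf
  have h_full : ∫ t, f t = 2 * KBessel α r := calc
    ∫ t, f t = (∫ t in Iic (-0), f t) + ∫ t in Ioi 0, f t := by
      rw [neg_zero, intervalIntegral.integral_Iic_add_Ioi hf.integrableOn hf.integrableOn]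
    _ = ∫ t in Ioi 0, (f (-t) + f t) := by
      rw [← integral_comp_neg_Ioi, integral_add hf.comp_neg.integrableOn hf.integrableOn]
    _ = 2 * KBessel α r := by
      rw [KBessel, ← integral_const_mul]
      exact setIntegral_congr_fun measurableSet_Ioi fun t _ => h_even_part t
  rw [h_full]
  ring

def ktildeIntegrand (α : ℂ) (r s : ℝ) : ℂ :=
  cexp (-rexp s - r ^ 2 / 4 * rexp (-s) - α * s)

lemma norm_ktildeIntegrand (α : ℂ) (r s : ℝ) :
    ‖ktildeIntegrand α r s‖ = (ktildeIntegrand α.re r s).re := by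
  rw [ktildeIntegrand, ktildeIntegrand, Complex.norm_exp, Complex.exp_re]
  simp [← Complex.ofReal_pow, -Complex.ofReal_exp]

lemma Ktilde_eq_half_integral {r : ℝ} (hr : 0 < r) (α : ℂ) :
    Ktilde α r = 1 / 2 * ∫ s : ℝ, ktildeIntegrand α r s := by
  set ℓ := Real.log (r / 2)
  have hcosh (s : ℝ) : r * Real.cosh (s - ℓ) = rexp s + r ^ 2 / 4 * rexp (-s) := by
    rw [Real.cosh_eq, neg_sub, Real.exp_sub, Real.exp_sub, Real.exp_log (by positivity),
      Real.exp_neg]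
    field_simp
    ring
  have hpow : ((r : ℂ) / 2) ^ (-α) = cexp (-α * ℓ) := by
    rw [← Complex.ofReal_cpow_eq_cexp_mul_log (by positivity)]
    push_cast
    rfl
  rw [Ktilde, KBessel_eq_half_integral hr, ← integral_sub_right_eq_self _ ℓ, mul_left_comm,
    ← integral_const_mul, hpow]
  congr 2 with s
  rw [ktildeIntegrand, Complex.ofReal_exp, ← Complex.exp_add, ← Complex.exp_add, neg_mul r,
    hcosh]
  push_cast
  ring_nf

section InnerProductSpace

variable {V : Type*} [NormedAddCommGroup V] [InnerProductSpace ℝ V]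

open Module

lemma cexp_inner_mul_ktildeIntegrand (α : ℂ) (s : ℝ) (ξ x : V) :
    cexp (-I * (inner ℝ ξ x : ℝ)) * ktildeIntegrand α ‖x‖ s =
      cexp (-rexp s - α * s) *
        cexp (-((rexp (-s) / 4 : ℝ) : ℂ) * ‖x‖ ^ 2 + -I * (inner ℝ ξ x : ℝ)) := by
  rw [ktildeIntegrand, ← Complex.exp_add, ← Complex.exp_add]
  push_cast
  ring_nf

variable [FiniteDimensional ℝ V] [MeasurableSpace V] [BorelSpace V]

lemma integrable_cexp_inner_mul_ktildeIntegrand (α : ℂ) (s : ℝ) (ξ : V) :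
    Integrable (fun x : V => cexp (-I * (inner ℝ ξ x : ℝ)) * ktildeIntegrand α ‖x‖ s) := by
  simp_rw [cexp_inner_mul_ktildeIntegrand]
  exact (GaussianFourier.integrable_cexp_neg_mul_sq_norm_add
    (by rw [Complex.ofReal_re]; positivity) _ ξ).const_mul _

lemma integral_cexp_inner_mul_ktildeIntegrand (α : ℂ) (s : ℝ) (ξ : V) :
    ∫ x : V, cexp (-I * (inner ℝ ξ x : ℝ)) * ktildeIntegrand α ‖x‖ s =
      ((4 * π : ℝ) : ℂ) ^ ((finrank ℝ V : ℂ) / 2) *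
        cexp (-(((1 + ‖ξ‖ ^ 2 : ℝ) : ℂ) * rexp s) + ((finrank ℝ V : ℂ) / 2 - α) * s) := by
  have hvar : π / (rexp (-s) / 4) = 4 * π * rexp s := by
    rw [Real.exp_neg]
    field_simp
  have hquad : (-I) ^ 2 * (‖ξ‖ : ℂ) ^ 2 / (4 * ((rexp (-s) / 4 : ℝ) : ℂ)) =
      -(‖ξ‖ ^ 2 * rexp s : ℝ) := by
    rw [neg_sq, Complex.I_sq, Real.exp_neg]
    push_cast
    field_simp
  simp_rw [cexp_inner_mul_ktildeIntegrand]
  rw [integral_const_mul, GaussianFourier.integral_cexp_neg_mul_sq_norm_add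
    (by rw [Complex.ofReal_re]; positivity), ← Complex.ofReal_div, hvar, Complex.ofReal_mul,
    Complex.mul_cpow_ofReal_nonneg (by positivity) (by positivity), Complex.ofReal_exp_cpow,
    hquad, mul_left_comm, mul_assoc, ← Complex.exp_add, ← Complex.exp_add]
  congr 2
  push_cast
  ring

lemma integrable_prod_cexp_inner_mul_ktildeIntegrand {α : ℂ} (hα : α.re < finrank ℝ V / 2)
    (ξ : V) :
    Integrable
      (fun p : V × ℝ => cexp (-I * (inner ℝ ξ p.1 : ℝ)) * ktildeIntegrand α ‖p.1‖ p.2)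
      (volume.prod volume) := by
  have hw : 0 < ((finrank ℝ V : ℂ) / 2 - α.re).re := by simpa using hα
  have h_norm_integral (s : ℝ) :
      ∫ x : V, ‖cexp (-I * (inner ℝ ξ x : ℝ)) * ktildeIntegrand α ‖x‖ s‖ =
        (((4 * π : ℝ) : ℂ) ^ ((finrank ℝ V : ℂ) / 2) *
          cexp (-(((1 : ℝ) : ℂ) * rexp s) + ((finrank ℝ V : ℂ) / 2 - α.re) * s)).re := by
    have h := integral_cexp_inner_mul_ktildeIntegrand (α.re : ℂ) s (0 : V)
    have hi := integrable_cexp_inner_mul_ktildeIntegrand (α.re : ℂ) s (0 : V)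
    simp only [inner_zero_left, Complex.ofReal_zero, mul_zero, Complex.exp_zero, one_mul,
      norm_zero] at h hi
    have h_unit (x : V) : ‖cexp (-I * (inner ℝ ξ x : ℝ))‖ = 1 := by
      simp [Complex.norm_exp]
    simp_rw [norm_mul, h_unit, one_mul, norm_ktildeIntegrand]
    have h_re := integral_re hi
    simp only [RCLike.re_to_complex] at h_re
    rw [h_re, h]
    norm_num
  have h_cont : Continuous fun p : V × ℝ =>
      cexp (-I * (inner ℝ ξ p.1 : ℝ)) * ktildeIntegrand α ‖p.1‖ p.2 := by
    unfold ktildeIntegrand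
    fun_prop
  rw [integrable_prod_iff' h_cont.aestronglyMeasurable]
  refine ⟨ae_of_all _ fun s => integrable_cexp_inner_mul_ktildeIntegrand α s ξ, ?_⟩
  simp_rw [h_norm_integral]
  exact ((integrable_cexp_neg_mul_exp_add_mul one_pos hw).const_mul _).re

variable [Nontrivial V]

lemma ae_cexp_inner_mul_Ktilde_eq_half_integral (α : ℂ) (ξ : V) :
    ∀ᵐ x : V, cexp (-I * (inner ℝ ξ x : ℝ)) * Ktilde α ‖x‖ =
      1 / 2 * ∫ s : ℝ, cexp (-I * (inner ℝ ξ x : ℝ)) * ktildeIntegrand α ‖x‖ s := by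
  filter_upwards [volume.ae_ne 0] with x hx
  rw [Ktilde_eq_half_integral (norm_pos_iff.mpr hx), integral_const_mul, mul_left_comm]

theorem integrable_Ktilde_norm {α : ℂ} (hα : α.re < finrank ℝ V / 2) :
    Integrable (fun x : V => Ktilde α ‖x‖) := by
  have h := ((integrable_prod_cexp_inner_mul_ktildeIntegrand hα (0 : V)).integral_prod_left
    |>.const_mul (1 / 2 : ℂ)).congr
      ((ae_cexp_inner_mul_Ktilde_eq_half_integral α 0).mono fun _ hx => hx.symm)
  simpa using h

theorem integral_cexp_inner_mul_Ktilde_norm {α : ℂ} (hα : α.re < finrank ℝ V / 2) (ξ : V) :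
    ∫ x : V, cexp (-I * (inner ℝ ξ x : ℝ)) * Ktilde α ‖x‖ =
      1 / 2 * ((4 * π : ℝ) : ℂ) ^ ((finrank ℝ V : ℂ) / 2) *
        Complex.Gamma ((finrank ℝ V : ℂ) / 2 - α) *
        ((1 + ‖ξ‖ ^ 2 : ℝ) : ℂ) ^ (-((finrank ℝ V : ℂ) / 2 - α)) := by
  have hw : 0 < ((finrank ℝ V : ℂ) / 2 - α).re := by simpa using hα
  rw [integral_congr_ae (ae_cexp_inner_mul_Ktilde_eq_half_integral α ξ), integral_const_mul,
    integral_integral_swap (integrable_prod_cexp_inner_mul_ktildeIntegrand hα ξ)]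
  simp_rw [integral_cexp_inner_mul_ktildeIntegrand]
  rw [integral_const_mul, integral_cexp_neg_mul_exp_add_mul (by positivity) hw]
  ring

end InnerProductSpace

/-- for `Re σ > −n` the function `x ↦ K̃_{−σ/2}(|x|)` is integrable on `ℝⁿ` and its
Fourier transform is a nonzero multiple of `(1+|ξ|²)^{−(σ+n)/2}`. -/
theorem stmt12 (n : ℕ) (hn : 1 ≤ n) (σ : ℂ) (hσ : -(n : ℝ) < σ.re) :
    Integrable (fun x : EuclideanSpace ℝ (Fin n) => Ktilde (-σ / 2) ‖x‖) ∧
    ∃ c : ℂ, c ≠ 0 ∧ ∀ ξ : EuclideanSpace ℝ (Fin n),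
      (∫ x : EuclideanSpace ℝ (Fin n),
          Complex.exp (-Complex.I * ((inner ℝ ξ x : ℝ) : ℂ)) * Ktilde (-σ / 2) ‖x‖) =
        c * ((1 + ‖ξ‖ ^ 2 : ℝ) : ℂ) ^ (-(σ + (n : ℂ)) / 2) := by
  have : NeZero n := ⟨by omega⟩
  have hdim := finrank_euclideanSpace_fin (𝕜 := ℝ) (n := n)
  have hα : (-σ / 2).re < Module.finrank ℝ (EuclideanSpace ℝ (Fin n)) / 2 := by
    simp only [hdim, Complex.div_ofNat_re, Complex.neg_re]
    linarith
  have hw : (n : ℂ) / 2 - -σ / 2 = (σ + n) / 2 := by ring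
  refine ⟨integrable_Ktilde_norm hα,
    1 / 2 * ((4 * π : ℝ) : ℂ) ^ ((n : ℂ) / 2) * Complex.Gamma ((σ + n) / 2), ?_, fun ξ => ?_⟩
  · refine mul_ne_zero (mul_ne_zero (by norm_num) ?_) (Complex.Gamma_ne_zero_of_re_pos ?_)
    · simp [Complex.cpow_eq_zero_iff, Real.pi_ne_zero]
    · simp only [Complex.div_ofNat_re, Complex.add_re, Complex.natCast_re]
      linarith
  · rw [integral_cexp_inner_mul_Ktilde_norm hα ξ, hdim, hw, neg_div]
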